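/- Suppose w₀ = 0, α_{n+1} ≤ ρ αₙ / 2 for every n, x ∈ D₁, and the superdifferential ∂⁺T_w(x) is nonempty. Then limsupₙ ∑_{k=1}^n w_k ≤ 0. -/

import Mathlib

open Filter Topology

/-- The (viscosity/Fréchet) subdifferential of `f : ℝ → ℝ`, relative to the domain `s`,
at the point `x`: the set of `c` with
`liminf_{h → 0, x + h ∈ s} (f (x + h) - f x - c * h) / |h| ≥ 0`. -/
def subdifferentialWithin (f : ℝ → ℝ) (s : Set ℝ) (x : ℝ) : Set ℝ :=
  {c | ∀ ε > (0 : ℝ), ∀ᶠ h in 𝓝[≠] (0 : ℝ), x + h ∈ s → -ε ≤ (f (x + h) - f x - c * h) / |h|}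

/-- The superdifferential `∂⁺f(x) = -∂(-f)(x)`. -/
def superdifferentialWithin (f : ℝ → ℝ) (s : Set ℝ) (x : ℝ) : Set ℝ :=
  {c | -c ∈ subdifferentialWithin (fun y => -f y) s x}

/-- The set of midpoints of the connected components of the complement of `s` (the
bounded components being the open intervals between consecutive points of `s`). -/
def midpoints (s : Set ℝ) : Set ℝ :=
  {m | ∃ a ∈ s, ∃ b ∈ s, a < b ∧ Set.Ioo a b ∩ s = ∅ ∧ m = (a + b) / 2}

/-- If `x ∈ S` and every other point of `S` is at distance at least `2|z - x|` from `x`,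
then the distance from `z` to `S` is exactly `|z - x|`. -/
lemma infDist_eq_abs_sub (S : Set ℝ) (x z : ℝ) (hx : x ∈ S)
    (hsep : ∀ y ∈ S, y ≠ x → 2 * |z - x| ≤ |y - x|) :
    Metric.infDist z S = |z - x| := by
  refine le_antisymm ?_ ?_
  · calc Metric.infDist z S ≤ dist z x := Metric.infDist_le_dist_of_mem hx
      _ = |z - x| := Real.dist_eq z x
  · by_contra hlt
    push_neg at hlt
    obtain ⟨y, hyS, hdy⟩ := (Metric.infDist_lt_iff ⟨x, hx⟩).1 hlt
    rw [Real.dist_eq] at hdy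
    rcases eq_or_ne y x with rfl | hne
    · exact absurd hdy (by simp)
    · have h1 := hsep y hyS hne
      have h2 : |y - x| ≤ |y - z| + |z - x| := by
        have := abs_add_le (y - z) (z - x)
        simpa [sub_add_sub_cancel] using this
      have h3 : |z - y| = |y - z| := abs_sub_comm _ _
      linarith [abs_nonneg (z - x)]

theorem stmt10
(D : ℕ → Set ℝ) (α : ℕ → ℝ) (ρ : ℝ) (w : ℕ → ℝ)
    (hD0 : (0 : ℝ) ∈ D 0) (hD1 : (1 : ℝ) ∈ D 0)
    (hDsub : ∀ n, D n ⊆ Set.Icc 0 1)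
    (hDfin : ∀ n, (D n).Finite)
    (hDmono : ∀ n, D n ⊆ D (n + 1))
    (hρ : ρ ∈ Set.Ioc (0 : ℝ) 1)
    (hα : Summable α)
    (hgapU : ∀ n, ∀ a ∈ D n, ∀ b ∈ D n, a < b → Set.Ioo a b ∩ D n = ∅ → b - a ≤ α n)
    (hgapL : ∀ n, ∀ a ∈ D n, ∀ b ∈ D n, a < b → ρ * α n ≤ b - a)
    (hwα : Summable (fun n => |w n * α n|))
    (hw0 : w 0 = 0) (hα2 : ∀ n, α (n + 1) ≤ ρ * α n / 2)
    (x : ℝ) (hx : x ∈ D 1) (hx01 : x ∈ Set.Ioo (0 : ℝ) 1)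
    (hsup : (superdifferentialWithin (fun z => ∑' n : ℕ, w n * Metric.infDist z (D n))
        (Set.Icc 0 1) x).Nonempty) :
    ∀ ε > (0 : ℝ), ∀ᶠ n in atTop, ∑ k ∈ Finset.Icc 1 n, w k ≤ ε := by
  classical
  intro ε hε
  set f : ℝ → ℝ := fun z => ∑' n : ℕ, w n * Metric.infDist z (D n) with hf
  obtain ⟨c, hc⟩ := hsup
  have hchain : ∀ m n : ℕ, m ≤ n → D m ⊆ D n := by
    intro m n hmn
    induction n, hmn using Nat.le_induction with
    | base => exact subset_rfl
    | succ n hmn ih => exact ih.trans (hDmono n)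
  have hxD : ∀ n : ℕ, 1 ≤ n → x ∈ D n := fun n hn => hchain 1 n hn hx
  have h1D : ∀ n : ℕ, (1:ℝ) ∈ D n := fun n => hchain 0 n (Nat.zero_le n) hD1
  have h0D : ∀ n : ℕ, (0:ℝ) ∈ D n := fun n => hchain 0 n (Nat.zero_le n) hD0
  -- positivity of α
  have hαpos : ∀ n, 0 < α n := by
    intro n
    set F := (hDfin n).toFinset with hFdef
    have h1F : (1:ℝ) ∈ F := (hDfin n).mem_toFinset.2 (h1D n)
    have h0F : (0:ℝ) ∈ F := (hDfin n).mem_toFinset.2 (h0D n)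
    set G := F.filter (fun y => y < (1:ℝ)) with hGdef
    have hG : G.Nonempty := ⟨0, Finset.mem_filter.2 ⟨h0F, one_pos⟩⟩
    set a := G.max' hG with hadef
    have haG : a ∈ G := G.max'_mem hG
    have ha1 : a < 1 := (Finset.mem_filter.1 haG).2
    have haD : a ∈ D n := (hDfin n).mem_toFinset.1 (Finset.mem_filter.1 haG).1
    have hgap : Set.Ioo a 1 ∩ D n = ∅ := by
      ext y
      simp only [Set.mem_inter_iff, Set.mem_Ioo, Set.mem_empty_iff_false, iff_false, not_and]
      rintro ⟨hay, hy1⟩ hyD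
      have hyG : y ∈ G := Finset.mem_filter.2 ⟨(hDfin n).mem_toFinset.2 hyD, hy1⟩
      exact absurd (Finset.le_max' G y hyG) (not_le.2 hay)
    have := hgapU n a haD 1 (h1D n) ha1 hgap
    linarith
  have hαmono : ∀ m n : ℕ, m ≤ n → α n ≤ α m := by
    intro m n hmn
    induction n, hmn using Nat.le_induction with
    | base => exact le_rfl
    | succ n hmn ih =>
      have h1 := hα2 n
      have h2 := hαpos n
      nlinarith [hρ.1, hρ.2]
  have hgeo : ∀ n : ℕ, α (n+1) ≤ (ρ/2)^n * α 1 := by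
    intro n
    induction n with
    | zero => simp
    | succ n ih =>
      have h1 := hα2 (n+1)
      have h2 := hαpos (n+1)
      calc α (n+2) ≤ ρ * α (n+1) / 2 := h1
        _ ≤ ρ/2 * ((ρ/2)^n * α 1) := by nlinarith [hρ.1]
        _ = (ρ/2)^(n+1) * α 1 := by ring
  -- right and left neighbours in D (n+1)
  have hexr : ∀ n : ℕ, ∃ y, y ∈ D (n+1) ∧ x < y ∧ Set.Ioo x y ∩ D (n+1) = ∅ := by
    intro n
    set F := ((hDfin (n+1)).toFinset.filter (fun y => x < y)) with hFdef
    have hne : F.Nonempty :=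
      ⟨1, Finset.mem_filter.2 ⟨(hDfin (n+1)).mem_toFinset.2 (h1D (n+1)), hx01.2⟩⟩
    refine ⟨F.min' hne, ?_, ?_, ?_⟩
    · have := Finset.mem_filter.1 (F.min'_mem hne)
      exact (hDfin (n+1)).mem_toFinset.1 this.1
    · exact (Finset.mem_filter.1 (F.min'_mem hne)).2
    · ext y
      simp only [Set.mem_inter_iff, Set.mem_Ioo, Set.mem_empty_iff_false, iff_false, not_and]
      rintro ⟨hxy, hyb⟩ hyD
      have hyF : y ∈ F := Finset.mem_filter.2 ⟨(hDfin (n+1)).mem_toFinset.2 hyD, hxy⟩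
      exact absurd (F.min'_le y hyF) (not_le.2 hyb)
  have hexl : ∀ n : ℕ, ∃ y, y ∈ D (n+1) ∧ y < x ∧ Set.Ioo y x ∩ D (n+1) = ∅ := by
    intro n
    set F := ((hDfin (n+1)).toFinset.filter (fun y => y < x)) with hFdef
    have hne : F.Nonempty :=
      ⟨0, Finset.mem_filter.2 ⟨(hDfin (n+1)).mem_toFinset.2 (h0D (n+1)), hx01.1⟩⟩
    refine ⟨F.max' hne, ?_, ?_, ?_⟩
    · have := Finset.mem_filter.1 (F.max'_mem hne)
      exact (hDfin (n+1)).mem_toFinset.1 this.1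
    · exact (Finset.mem_filter.1 (F.max'_mem hne)).2
    · ext y
      simp only [Set.mem_inter_iff, Set.mem_Ioo, Set.mem_empty_iff_false, iff_false, not_and]
      rintro ⟨hay, hyx⟩ hyD
      have hyF : y ∈ F := Finset.mem_filter.2 ⟨(hDfin (n+1)).mem_toFinset.2 hyD, hyx⟩
      exact absurd (F.le_max' y hyF) (not_le.2 hay)
  choose b hbD hxb hbgap using hexr
  choose a haD hax hagap using hexl
  have hbub : ∀ n, b n - x ≤ α (n+1) := fun n =>
    hgapU (n+1) x (hxD (n+1) (Nat.le_add_left 1 n)) (b n) (hbD n) (hxb n) (hbgap n)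
  have haub : ∀ n, x - a n ≤ α (n+1) := fun n =>
    hgapU (n+1) (a n) (haD n) x (hxD (n+1) (Nat.le_add_left 1 n)) (hax n) (hagap n)
  -- separation: points of D k other than x are far from x
  have hsep : ∀ n k : ℕ, 1 ≤ k → k ≤ n → ∀ y ∈ D k, y ≠ x → 2 * α (n+1) ≤ |y - x| := by
    intro n k hk1 hkn y hy hne
    have hax : 2 * α (k+1) ≤ ρ * α k := by
      have := hα2 k; linarith
    have hmono : α (n+1) ≤ α (k+1) := hαmono (k+1) (n+1) (Nat.succ_le_succ hkn)
    have hxk : x ∈ D k := hxD k hk1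
    rcases lt_or_gt_of_ne hne with hlt | hgt
    · have := hgapL k y hy x hxk hlt
      rw [abs_of_neg (by linarith : y - x < 0)]
      linarith
    · have := hgapL k x hxk y hy hgt
      rw [abs_of_pos (by linarith : 0 < y - x)]
      linarith
  -- value of f at a point z with |z - x| ≤ α (n+1) lying in D (n+1)
  have hfval : ∀ n : ℕ, ∀ z : ℝ, z ∈ D (n+1) → |z - x| ≤ α (n+1) →
      f z = (∑ k ∈ Finset.Icc 1 n, w k) * |z - x| := by
    intro n z hz hzd
    have step : f z = ∑ k ∈ Finset.Icc 1 n, w k * Metric.infDist z (D k) := by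
      rw [hf]
      apply tsum_eq_sum
      intro k hk
      rw [Finset.mem_Icc, not_and_or] at hk
      rcases hk with hk | hk
      · have : k = 0 := by omega
        simp [this, hw0]
      · have hnk : n + 1 ≤ k := by omega
        have : z ∈ D k := hchain (n+1) k hnk hz
        simp [Metric.infDist_zero_of_mem this]
    rw [step, Finset.sum_mul]
    refine Finset.sum_congr rfl fun k hk => ?_
    obtain ⟨hk1, hkn⟩ := Finset.mem_Icc.1 hk
    congr 1
    refine infDist_eq_abs_sub (D k) x z (hxD k hk1) fun y hy hne => ?_
    have h1 := hsep n k hk1 hkn y hy hne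
    have : 2 * |z - x| ≤ 2 * α (n+1) := by linarith [hzd]
    linarith
  have hfb : ∀ n, f (b n) = (∑ k ∈ Finset.Icc 1 n, w k) * (b n - x) := by
    intro n
    have hpos : 0 < b n - x := by linarith [hxb n]
    have := hfval n (b n) (hbD n) (by rw [abs_of_pos hpos]; exact hbub n)
    rwa [abs_of_pos hpos] at this
  have hfa : ∀ n, f (a n) = (∑ k ∈ Finset.Icc 1 n, w k) * (x - a n) := by
    intro n
    have hpos : a n - x < 0 := by linarith [hax n]
    have := hfval n (a n) (haD n) (by rw [abs_of_neg hpos]; linarith [haub n])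
    rw [abs_of_neg hpos] at this
    convert this using 2
    ring
  have hfx : f x = 0 := by
    have hz : ∀ k : ℕ, w k * Metric.infDist x (D k) = 0 := by
      intro k
      cases k with
      | zero => simp [hw0]
      | succ m =>
        rw [Metric.infDist_zero_of_mem (hxD (m+1) (Nat.le_add_left 1 m)), mul_zero]
    rw [hf]
    exact (tsum_congr hz).trans tsum_zero
  -- the supergradient inequality along the two sequences
  have hcc : ∀ᶠ h in 𝓝[≠] (0:ℝ), x + h ∈ Set.Icc (0:ℝ) 1 →
      -ε ≤ (-(f (x + h)) - (-(f x)) - (-c) * h) / |h| := hc ε hε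
  have hαlim : Tendsto (fun n : ℕ => (ρ/2)^n * α 1) atTop (𝓝 0) := by
    have h2 : |ρ/2| < 1 := by
      rw [abs_of_pos (by linarith [hρ.1])]
      linarith [hρ.2]
    simpa using (tendsto_pow_atTop_nhds_zero_of_abs_lt_one h2).mul_const (α 1)
  have hblim : Tendsto (fun n : ℕ => b n - x) atTop (𝓝[≠] (0:ℝ)) := by
    apply tendsto_nhdsWithin_of_tendsto_nhds_of_eventually_within
    · exact squeeze_zero (fun n => by show (0:ℝ) ≤ b n - x; linarith [hxb n])
        (fun n => (hbub n).trans (hgeo n)) hαlim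
    · exact Eventually.of_forall fun n => by
        simpa using (by linarith [hxb n] : b n - x ≠ 0)
  have halim : Tendsto (fun n : ℕ => a n - x) atTop (𝓝[≠] (0:ℝ)) := by
    apply tendsto_nhdsWithin_of_tendsto_nhds_of_eventually_within
    · have := squeeze_zero (α := ℕ) (f := fun n => x - a n)
        (fun n => by show (0:ℝ) ≤ x - a n; linarith [hax n])
        (fun n => (haub n).trans (hgeo n)) hαlim
      have hneg : Tendsto (fun n : ℕ => -(x - a n)) atTop (𝓝 (-0)) := this.neg
      simpa using hneg
    · exact Eventually.of_forall fun n => by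
        simpa using (by linarith [hax n] : a n - x ≠ 0)
  have hev1 := hblim.eventually hcc
  have hev2 := halim.eventually hcc
  filter_upwards [hev1, hev2] with n h1 h2
  have hbmem : x + (b n - x) ∈ Set.Icc (0:ℝ) 1 := by
    have : x + (b n - x) = b n := by ring
    rw [this]; exact hDsub (n+1) (hbD n)
  have hamem : x + (a n - x) ∈ Set.Icc (0:ℝ) 1 := by
    have : x + (a n - x) = a n := by ring
    rw [this]; exact hDsub (n+1) (haD n)
  have h1' := h1 hbmem
  have h2' := h2 hamem
  have hbx : x + (b n - x) = b n := by ring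
  have hax' : x + (a n - x) = a n := by ring
  rw [hbx, hfb n, hfx] at h1'
  rw [hax', hfa n, hfx] at h2'
  have hbpos : 0 < b n - x := by linarith [hxb n]
  rw [abs_of_pos hbpos] at h1'
  rw [abs_of_neg (by linarith [hax n] : a n - x < 0)] at h2'
  have hd : (0:ℝ) < -(a n - x) := by linarith [hax n]
  have h1'' := (le_div_iff₀ hbpos).1 h1'
  have h2'' := (le_div_iff₀ hd).1 h2'
  have e1 : -((∑ k ∈ Finset.Icc 1 n, w k) * (b n - x)) - -(0:ℝ) - -c * (b n - x)
      = (c - ∑ k ∈ Finset.Icc 1 n, w k) * (b n - x) := by ring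
  have e2 : -((∑ k ∈ Finset.Icc 1 n, w k) * (x - a n)) - -(0:ℝ) - -c * (a n - x)
      = (-(∑ k ∈ Finset.Icc 1 n, w k) - c) * -(a n - x) := by ring
  rw [e1] at h1''
  rw [e2] at h2''
  have k1 := le_of_mul_le_mul_right h1'' hbpos
  have k2 := le_of_mul_le_mul_right h2'' hd
  linarith [k1, k2]
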